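/- arXiv:gr-qc/9809054 — 2 statements merged into one kernel-verified Lean document; each statement's English description precedes it below -/
import Mathlib

section
/- Let x₀, ẋ₀, y₀, ẏ₀ ∈ ℝ and define X, Y : (−∞, 1) → ℝ by X(u) = x₀ + ẋ₀(2 + u₋) − ẋ₀/(1 + u₊) and Y(u) = y₀ + ẏ₀ u₋ + ẏ₀/(1 − u₊). Then X and Y are continuously differentiable on (−∞, 1) (in particular at u = 0), smooth on (−∞, 0) and on (0, 1), they satisfy X(−1) = x₀, X'(−1) = ẋ₀, Y(−1) = y₀, Y'(−1) = ẏ₀, and for every u ∈ (−∞, 1) the conserved-momentum (geodesic) equations (1 + u₊)² X'(u) = ẋ₀ and (1 − u₊)² Y'(u) = ẏ₀ hold; equivalently, X'' = 0 and Y'' = 0 on (−∞, 0), while on (0,1) one has d/du[(1+u)² X'(u)] = 0 and d/du[(1−u)² Y'(u)] = 0. -/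
open Set

/-- The kink function `u₊ = u θ(u)`. -/
noncomputable def uplus (u : ℝ) : ℝ := max u 0

/-- The function `u₋ = u θ(-u)`. -/
noncomputable def uminus (u : ℝ) : ℝ := min u 0

/-- The `X`-geodesic of the impulsive plane wave in continuous (Rosen-type) coordinates,
with `X(-1) = x₀`, `X'(-1) = ẋ₀`. -/
noncomputable def Xgeo (x₀ xdot0 : ℝ) (u : ℝ) : ℝ :=
  x₀ + xdot0 * (2 + uminus u) - xdot0 / (1 + uplus u)

/-- The `Y`-geodesic of the impulsive plane wave in continuous (Rosen-type) coordinates,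
with `Y(-1) = y₀`, `Y'(-1) = ẏ₀`. -/
noncomputable def Ygeo (y₀ ydot0 : ℝ) (u : ℝ) : ℝ :=
  y₀ + ydot0 * uminus u + ydot0 / (1 - uplus u)

/-- The `V`-geodesic of the impulsive plane wave in continuous (Rosen-type) coordinates,
with `V(-1) = v₀`, `V'(-1) = v̇₀`. -/
noncomputable def Vgeo (v₀ vdot0 xdot0 ydot0 : ℝ) (u : ℝ) : ℝ :=
  v₀ + vdot0 * (1 + u) + ydot0 ^ 2 * (uplus u) ^ 2 / (1 - u)
    - xdot0 ^ 2 * (uplus u) ^ 2 / (1 + u)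

-- right model functions
lemma hXr (x₀ xdot0 : ℝ) {t : ℝ} (ht : (1:ℝ) + t ≠ 0) :
    HasDerivAt (fun s => x₀ + xdot0 * 2 - xdot0 / (1 + s)) (xdot0 / (1 + t) ^ 2) t := by
  have h1 : HasDerivAt (fun s : ℝ => 1 + s) 1 t := (hasDerivAt_id t).const_add 1
  have h2 := (hasDerivAt_const t xdot0).fun_div h1 ht
  have h3 := ((hasDerivAt_const t (x₀ + xdot0 * 2)).fun_sub h2)
  refine h3.congr_deriv ?_
  ring
lemma hYr (y₀ ydot0 : ℝ) {t : ℝ} (ht : (1:ℝ) - t ≠ 0) :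
    HasDerivAt (fun s => y₀ + ydot0 * 0 + ydot0 / (1 - s)) (ydot0 / (1 - t) ^ 2) t := by
  have h1 : HasDerivAt (fun s : ℝ => 1 - s) (-1) t := by
    simpa using (hasDerivAt_id t).const_sub 1
  have h2 := (hasDerivAt_const t ydot0).fun_div h1 ht
  have h3 := ((hasDerivAt_const t (y₀ + ydot0 * 0)).fun_add h2)
  refine h3.congr_deriv ?_
  ring
lemma hXl (x₀ xdot0 : ℝ) (t : ℝ) :
    HasDerivAt (fun s => x₀ + xdot0 * (2 + s) - xdot0) xdot0 t := by
  have h1 : HasDerivAt (fun s : ℝ => 2 + s) 1 t := (hasDerivAt_id t).const_add 2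
  have := ((h1.const_mul xdot0).const_add x₀).sub_const xdot0
  simpa using this
lemma hYl (y₀ ydot0 : ℝ) (t : ℝ) :
    HasDerivAt (fun s => y₀ + ydot0 * s + ydot0) ydot0 t := by
  have := (((hasDerivAt_id t).const_mul ydot0).const_add y₀).add_const ydot0
  simpa using this

lemma Xeq_left {x₀ xdot0 t : ℝ} (ht : t ≤ 0) :
    Xgeo x₀ xdot0 t = x₀ + xdot0 * (2 + t) - xdot0 := by
  simp [Xgeo, uplus, uminus, max_eq_right ht, min_eq_left ht]
lemma Xeq_right {x₀ xdot0 t : ℝ} (ht : 0 ≤ t) :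
    Xgeo x₀ xdot0 t = x₀ + xdot0 * 2 - xdot0 / (1 + t) := by
  simp [Xgeo, uplus, uminus, max_eq_left ht, min_eq_right ht]
lemma Yeq_left {y₀ ydot0 t : ℝ} (ht : t ≤ 0) :
    Ygeo y₀ ydot0 t = y₀ + ydot0 * t + ydot0 := by
  simp [Ygeo, uplus, uminus, max_eq_right ht, min_eq_left ht]
lemma Yeq_right {y₀ ydot0 t : ℝ} (ht : 0 ≤ t) :
    Ygeo y₀ ydot0 t = y₀ + ydot0 * 0 + ydot0 / (1 - t) := by
  simp [Ygeo, uplus, uminus, max_eq_left ht, min_eq_right ht]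

lemma Xderiv (x₀ xdot0 : ℝ) {u : ℝ} (hu : u < 1) :
    HasDerivAt (Xgeo x₀ xdot0) (xdot0 / (1 + uplus u) ^ 2) u := by
  rcases lt_trichotomy u 0 with h | h | h
  · have hev : Xgeo x₀ xdot0 =ᶠ[nhds u] fun s => x₀ + xdot0 * (2 + s) - xdot0 := by
      filter_upwards [Iio_mem_nhds h] with t ht
      exact Xeq_left ht.le
    have : HasDerivAt (Xgeo x₀ xdot0) xdot0 u := (hXl x₀ xdot0 u).congr_of_eventuallyEq hev
    simpa [uplus, max_eq_right h.le] using this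
  · subst h
    have hl : HasDerivWithinAt (Xgeo x₀ xdot0) xdot0 (Iic 0) 0 :=
      ((hXl x₀ xdot0 0).hasDerivWithinAt).congr (fun t ht => Xeq_left ht) (Xeq_left le_rfl)
    have hr : HasDerivWithinAt (Xgeo x₀ xdot0) xdot0 (Ici 0) 0 := by
      have := ((hXr x₀ xdot0 (t := 0) (by norm_num)).hasDerivWithinAt (s := Ici (0:ℝ)))
      simpa using this.congr (fun t ht => Xeq_right ht) (Xeq_right le_rfl)
    have := hl.union hr
    rw [Iic_union_Ici] at this
    have h0 := this.hasDerivAt (by simp)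
    simpa [uplus] using h0
  · have h1 : (1:ℝ) + u ≠ 0 := by linarith
    have hev : Xgeo x₀ xdot0 =ᶠ[nhds u] fun s => x₀ + xdot0 * 2 - xdot0 / (1 + s) := by
      filter_upwards [Ioi_mem_nhds h] with t ht
      exact Xeq_right (le_of_lt ht)
    have := (hXr x₀ xdot0 h1).congr_of_eventuallyEq hev
    simpa [uplus, max_eq_left h.le] using this

lemma Yderiv (y₀ ydot0 : ℝ) {u : ℝ} (hu : u < 1) :
    HasDerivAt (Ygeo y₀ ydot0) (ydot0 / (1 - uplus u) ^ 2) u := by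
  rcases lt_trichotomy u 0 with h | h | h
  · have hev : Ygeo y₀ ydot0 =ᶠ[nhds u] fun s => y₀ + ydot0 * s + ydot0 := by
      filter_upwards [Iio_mem_nhds h] with t ht
      exact Yeq_left ht.le
    have : HasDerivAt (Ygeo y₀ ydot0) ydot0 u := (hYl y₀ ydot0 u).congr_of_eventuallyEq hev
    simpa [uplus, max_eq_right h.le] using this
  · subst h
    have hl : HasDerivWithinAt (Ygeo y₀ ydot0) ydot0 (Iic 0) 0 :=
      ((hYl y₀ ydot0 0).hasDerivWithinAt).congr (fun t ht => Yeq_left ht) (Yeq_left le_rfl)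
    have hr : HasDerivWithinAt (Ygeo y₀ ydot0) ydot0 (Ici 0) 0 := by
      have := ((hYr y₀ ydot0 (t := 0) (by norm_num)).hasDerivWithinAt (s := Ici (0:ℝ)))
      simpa using this.congr (fun t ht => Yeq_right ht) (Yeq_right le_rfl)
    have := hl.union hr
    rw [Iic_union_Ici] at this
    have h0 := this.hasDerivAt (by simp)
    simpa [uplus] using h0
  · have h1 : (1:ℝ) - u ≠ 0 := by linarith
    have hev : Ygeo y₀ ydot0 =ᶠ[nhds u] fun s => y₀ + ydot0 * 0 + ydot0 / (1 - s) := by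
      filter_upwards [Ioi_mem_nhds h] with t ht
      exact Yeq_right (le_of_lt ht)
    have := (hYr y₀ ydot0 h1).congr_of_eventuallyEq hev
    simpa [uplus, max_eq_left h.le] using this

/-- The transverse geodesics `X, Y` of the continuous form of the impulsive plane wave:
they are `C¹` on `(-∞,1)`, smooth off the shock, satisfy the initial conditions at
`u = -1`, and satisfy the conserved-momentum geodesic equations
`(1+u₊)² X' = ẋ₀`, `(1-u₊)² Y' = ẏ₀`. -/
theorem continuous_metric_transverse_geodesics (x₀ xdot0 y₀ ydot0 : ℝ) :
    ContDiffOn ℝ 1 (Xgeo x₀ xdot0) (Iio 1) ∧ ContDiffOn ℝ 1 (Ygeo y₀ ydot0) (Iio 1) ∧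
    ContDiffOn ℝ (⊤ : ℕ∞) (Xgeo x₀ xdot0) (Iio 0) ∧ ContDiffOn ℝ (⊤ : ℕ∞) (Xgeo x₀ xdot0) (Ioo 0 1) ∧
    ContDiffOn ℝ (⊤ : ℕ∞) (Ygeo y₀ ydot0) (Iio 0) ∧ ContDiffOn ℝ (⊤ : ℕ∞) (Ygeo y₀ ydot0) (Ioo 0 1) ∧
    Xgeo x₀ xdot0 (-1) = x₀ ∧ deriv (Xgeo x₀ xdot0) (-1) = xdot0 ∧
    Ygeo y₀ ydot0 (-1) = y₀ ∧ deriv (Ygeo y₀ ydot0) (-1) = ydot0 ∧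
    (∀ u < (1:ℝ), (1 + uplus u) ^ 2 * deriv (Xgeo x₀ xdot0) u = xdot0 ∧
                  (1 - uplus u) ^ 2 * deriv (Ygeo y₀ ydot0) u = ydot0) ∧
    (∀ u < (0:ℝ), deriv (deriv (Xgeo x₀ xdot0)) u = 0 ∧
                  deriv (deriv (Ygeo y₀ ydot0)) u = 0) ∧
    (∀ u ∈ Ioo (0:ℝ) 1,
      deriv (fun t => (1 + t) ^ 2 * deriv (Xgeo x₀ xdot0) t) u = 0 ∧
      deriv (fun t => (1 - t) ^ 2 * deriv (Ygeo y₀ ydot0) t) u = 0) := by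
  have hden : ∀ u : ℝ, (1 + uplus u) ≠ 0 := fun u => by
    have : (0:ℝ) ≤ uplus u := le_max_right _ _
    positivity
  have hdenY : ∀ u : ℝ, u < 1 → (1 - uplus u) ≠ 0 := fun u hu =>
    sub_ne_zero.mpr (ne_of_lt (show uplus u < 1 from max_lt hu one_pos)).symm
  have hXd : ∀ u ∈ Iio (1:ℝ), deriv (Xgeo x₀ xdot0) u = xdot0 / (1 + uplus u) ^ 2 :=
    fun u hu => (Xderiv x₀ xdot0 hu).deriv
  have hYd : ∀ u ∈ Iio (1:ℝ), deriv (Ygeo y₀ ydot0) u = ydot0 / (1 - uplus u) ^ 2 :=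
    fun u hu => (Yderiv y₀ ydot0 hu).deriv
  refine ⟨?_, ?_, ?_, ?_, ?_, ?_, ?_, ?_, ?_, ?_, ?_, ?_, ?_⟩
  · -- C¹ of X on Iio 1
    rw [show (1 : WithTop ℕ∞) = 0 + 1 by norm_num, contDiffOn_succ_iff_deriv_of_isOpen isOpen_Iio]
    refine ⟨fun u hu => (Xderiv x₀ xdot0 hu).differentiableAt.differentiableWithinAt, by simp, ?_⟩
    rw [contDiffOn_zero]
    refine ContinuousOn.congr (f := fun u => xdot0 / (1 + uplus u) ^ 2) ?_ hXd
    exact (Continuous.div continuous_const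
      ((continuous_const.add (continuous_id.max continuous_const)).pow 2)
      (fun u => pow_ne_zero 2 (hden u))).continuousOn
  · -- C¹ of Y on Iio 1
    rw [show (1 : WithTop ℕ∞) = 0 + 1 by norm_num, contDiffOn_succ_iff_deriv_of_isOpen isOpen_Iio]
    refine ⟨fun u hu => (Yderiv y₀ ydot0 hu).differentiableAt.differentiableWithinAt, by simp, ?_⟩
    rw [contDiffOn_zero]
    refine ContinuousOn.congr (f := fun u => ydot0 / (1 - uplus u) ^ 2) ?_ hYd
    refine ContinuousOn.div continuousOn_const
      ((continuous_const.sub (continuous_id.max continuous_const)).pow 2).continuousOn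
      (fun u hu => pow_ne_zero 2 (hdenY u hu))
  · exact (ContDiff.contDiffOn (by
      exact (contDiff_const.add (contDiff_const.mul (contDiff_const.add contDiff_id))).sub
        contDiff_const)).congr (fun t ht => Xeq_left (le_of_lt ht))
  · refine (ContDiffOn.sub contDiffOn_const (ContDiffOn.div contDiffOn_const
      ((contDiff_const.add contDiff_id).contDiffOn) (fun t ht => by
        have := ht.1; intro h; simp at h; linarith))).congr
      (fun t ht => Xeq_right (le_of_lt ht.1))
  · exact (ContDiff.contDiffOn (by
      exact (contDiff_const.add (contDiff_const.mul contDiff_id)).add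
        contDiff_const)).congr (fun t ht => Yeq_left (le_of_lt ht))
  · refine (ContDiffOn.add contDiffOn_const (ContDiffOn.div contDiffOn_const
      ((contDiff_const.sub contDiff_id).contDiffOn) (fun t ht => by
        have := ht.2; intro h; simp at h; linarith))).congr
      (fun t ht => Yeq_right (le_of_lt ht.1))
  · rw [Xeq_left (by norm_num : (-1:ℝ) ≤ 0)]; ring
  · rw [hXd (-1) (by norm_num)]; simp [uplus]
  · rw [Yeq_left (by norm_num : (-1:ℝ) ≤ 0)]; ring
  · rw [hYd (-1) (by norm_num)]; simp [uplus]
  · intro u hu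
    rw [hXd u hu, hYd u hu]
    constructor <;> field_simp [hden u, hdenY u hu]
  · intro u hu
    have h1 : u < 1 := lt_trans hu one_pos
    have hevX : deriv (Xgeo x₀ xdot0) =ᶠ[nhds u] fun _ => xdot0 := by
      filter_upwards [Iio_mem_nhds hu] with t ht
      rw [hXd t (mem_Iio.mpr (lt_trans ht one_pos))]
      simp [uplus, max_eq_right (le_of_lt (mem_Iio.mp ht))]
    have hevY : deriv (Ygeo y₀ ydot0) =ᶠ[nhds u] fun _ => ydot0 := by
      filter_upwards [Iio_mem_nhds hu] with t ht
      rw [hYd t (mem_Iio.mpr (lt_trans ht one_pos))]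
      simp [uplus, max_eq_right (le_of_lt (mem_Iio.mp ht))]
    rw [hevX.deriv_eq, hevY.deriv_eq, deriv_const, deriv_const]
    exact ⟨rfl, rfl⟩
  · intro u hu
    have hmem := isOpen_Ioo.mem_nhds hu
    have hevX : (fun t => (1 + t) ^ 2 * deriv (Xgeo x₀ xdot0) t) =ᶠ[nhds u]
        fun _ => xdot0 := by
      filter_upwards [hmem] with t ht
      rw [hXd t ht.2]
      have hne : (1:ℝ) + t ≠ 0 := by have := ht.1; intro h; linarith
      rw [show uplus t = t from max_eq_left ht.1.le]
      field_simp
    have hevY : (fun t => (1 - t) ^ 2 * deriv (Ygeo y₀ ydot0) t) =ᶠ[nhds u]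
        fun _ => ydot0 := by
      filter_upwards [hmem] with t ht
      rw [hYd t ht.2]
      have hne : (1:ℝ) - t ≠ 0 := by have := ht.2; intro h; linarith
      rw [show uplus t = t from max_eq_left ht.1.le]
      field_simp
    rw [hevX.deriv_eq, hevY.deriv_eq, deriv_const, deriv_const]
    exact ⟨rfl, rfl⟩
end

section
/- Let x₀, ẋ₀, y₀, ẏ₀, v₀, v̇₀ ∈ ℝ, let X(u) = x₀ + ẋ₀(2 + u₋) − ẋ₀/(1 + u₊), Y(u) = y₀ + ẏ₀ u₋ + ẏ₀/(1 − u₊), and define V : (−∞, 1) → ℝ by V(u) = v₀ + v̇₀(1 + u) + ẏ₀² u₊²/(1 − u) − ẋ₀² u₊²/(1 + u). Then V is continuously differentiable on (−∞, 1) (in particular at u = 0), smooth on (−∞, 0) and on (0, 1), satisfies V(−1) = v₀, V'(−1) = v̇₀, V'' = 0 on (−∞, 0) and V''(u) = 2(1 − u) Y'(u)² − 2(1 + u) X'(u)² on (0, 1); moreover the affine-parameter normalization −V'(u) + (1 + u₊)² X'(u)² + (1 − u₊)² Y'(u)² = −v̇₀ + ẋ₀² + ẏ₀² holds for all u ∈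 (−∞, 1). -/
open Filter Asymptotics


open Set

lemma uplus_of_nonpos {u : ℝ} (h : u ≤ 0) : uplus u = 0 := max_eq_right h
lemma uplus_of_nonneg {u : ℝ} (h : 0 ≤ u) : uplus u = u := max_eq_left h
lemma uminus_of_nonpos {u : ℝ} (h : u ≤ 0) : uminus u = u := min_eq_left h
lemma uminus_of_nonneg {u : ℝ} (h : 0 ≤ u) : uminus u = 0 := min_eq_right h

lemma hasDerivAt_of_sq_bound (f : ℝ → ℝ) (c C : ℝ)
    (h : ∀ᶠ x in nhds (0:ℝ), |f x - f 0 - c * x| ≤ C * x ^ 2) : HasDerivAt f c 0 := by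
  rw [hasDerivAt_iff_isLittleO]
  have h1 : (fun x => f x - f 0 - (x - 0) • c) =O[nhds (0:ℝ)] (fun x => x ^ 2) := by
    apply IsBigO.of_bound C
    filter_upwards [h] with x hx
    simpa [mul_comm, abs_of_nonneg (sq_nonneg x)] using hx
  exact h1.trans_isLittleO (by simpa using isLittleO_pow_id (𝕜 := ℝ) (n := 2) one_lt_two)


lemma hasDerivAt_X_zero (x₀ xdot0 : ℝ) : HasDerivAt (Xgeo x₀ xdot0) xdot0 0 := by
  apply hasDerivAt_of_sq_bound _ _ |xdot0|
  filter_upwards [eventually_abs_sub_lt (0:ℝ) (by norm_num : (0:ℝ) < 1/2)] with x hx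
  rw [sub_zero] at hx
  rcases le_or_gt x 0 with h | h
  · simp only [Xgeo, uplus_of_nonpos h, uminus_of_nonpos h, uplus_of_nonneg le_rfl,
      uminus_of_nonneg le_rfl]
    have : x₀ + xdot0 * (2 + x) - xdot0 / (1 + 0) - (x₀ + xdot0 * (2 + 0) - xdot0 / (1 + 0))
        - xdot0 * x = 0 := by ring
    rw [this, abs_zero]
    positivity
  · have hx1 : (1:ℝ) + x ≠ 0 := by positivity
    simp only [Xgeo, uplus_of_nonneg h.le, uminus_of_nonneg h.le, uplus_of_nonpos le_rfl,
      uminus_of_nonpos le_rfl]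
    have : x₀ + xdot0 * (2 + 0) - xdot0 / (1 + x) - (x₀ + xdot0 * (2 + 0) - xdot0 / (1 + 0))
        - xdot0 * x = -(xdot0 * (x ^ 2 / (1 + x))) := by
      field_simp; ring
    rw [this, abs_neg, abs_mul]
    have h2 : |x ^ 2 / (1 + x)| ≤ x ^ 2 := by
      rw [abs_div, abs_of_nonneg (sq_nonneg x), abs_of_pos (by positivity : (0:ℝ) < 1 + x)]
      exact div_le_self (sq_nonneg x) (by linarith)
    calc |xdot0| * |x ^ 2 / (1 + x)| ≤ |xdot0| * x ^ 2 :=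
          mul_le_mul_of_nonneg_left h2 (abs_nonneg _)

lemma hasDerivAt_Y_zero (y₀ ydot0 : ℝ) : HasDerivAt (Ygeo y₀ ydot0) ydot0 0 := by
  apply hasDerivAt_of_sq_bound _ _ (2 * |ydot0|)
  filter_upwards [eventually_abs_sub_lt (0:ℝ) (by norm_num : (0:ℝ) < 1/2)] with x hx
  rw [sub_zero, abs_lt] at hx
  rcases le_or_gt x 0 with h | h
  · simp only [Ygeo, uplus_of_nonpos h, uminus_of_nonpos h, uplus_of_nonneg le_rfl,
      uminus_of_nonneg le_rfl]
    have : y₀ + ydot0 * x + ydot0 / (1 - 0) - (y₀ + ydot0 * 0 + ydot0 / (1 - 0))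
        - ydot0 * x = 0 := by ring
    rw [this, abs_zero]
    positivity
  · have hx2 : (1:ℝ) - x > 1/2 := by linarith [hx.2]
    have hx1 : (1:ℝ) - x ≠ 0 := by linarith
    simp only [Ygeo, uplus_of_nonneg h.le, uminus_of_nonneg h.le, uplus_of_nonpos le_rfl,
      uminus_of_nonpos le_rfl]
    have : y₀ + ydot0 * 0 + ydot0 / (1 - x) - (y₀ + ydot0 * 0 + ydot0 / (1 - 0))
        - ydot0 * x = ydot0 * (x ^ 2 / (1 - x)) := by
      field_simp; ring
    rw [this, abs_mul]
    have h2 : |x ^ 2 / (1 - x)| ≤ 2 * x ^ 2 := by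
      rw [abs_div, abs_of_nonneg (sq_nonneg x), abs_of_pos (by linarith : (0:ℝ) < 1 - x)]
      rw [div_le_iff₀ (by linarith : (0:ℝ) < 1 - x)]
      nlinarith [sq_nonneg x]
    calc |ydot0| * |x ^ 2 / (1 - x)| ≤ |ydot0| * (2 * x ^ 2) :=
          mul_le_mul_of_nonneg_left h2 (abs_nonneg _)
      _ = 2 * |ydot0| * x ^ 2 := by ring

lemma hasDerivAt_V_zero (v₀ vdot0 xdot0 ydot0 : ℝ) :
    HasDerivAt (Vgeo v₀ vdot0 xdot0 ydot0) vdot0 0 := by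
  apply hasDerivAt_of_sq_bound _ _ (2 * (xdot0 ^ 2 + ydot0 ^ 2))
  filter_upwards [eventually_abs_sub_lt (0:ℝ) (by norm_num : (0:ℝ) < 1/2)] with x hx
  rw [sub_zero, abs_lt] at hx
  rcases le_or_gt x 0 with h | h
  · simp only [Vgeo, uplus_of_nonpos h, uplus_of_nonneg le_rfl]
    have : v₀ + vdot0 * (1 + x) + ydot0 ^ 2 * 0 ^ 2 / (1 - x) - xdot0 ^ 2 * 0 ^ 2 / (1 + x)
        - (v₀ + vdot0 * (1 + 0) + ydot0 ^ 2 * 0 ^ 2 / (1 - 0) - xdot0 ^ 2 * 0 ^ 2 / (1 + 0))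
        - vdot0 * x = 0 := by ring
    rw [this, abs_zero]
    positivity
  · have hx2 : (1:ℝ) - x > 1/2 := by linarith [hx.2]
    have hx3 : (0:ℝ) < 1 + x := by linarith
    simp only [Vgeo, uplus_of_nonneg h.le, uplus_of_nonpos le_rfl]
    have : v₀ + vdot0 * (1 + x) + ydot0 ^ 2 * x ^ 2 / (1 - x) - xdot0 ^ 2 * x ^ 2 / (1 + x)
        - (v₀ + vdot0 * (1 + 0) + ydot0 ^ 2 * 0 ^ 2 / (1 - 0) - xdot0 ^ 2 * 0 ^ 2 / (1 + 0))
        - vdot0 * x = ydot0 ^ 2 * x ^ 2 / (1 - x) - xdot0 ^ 2 * x ^ 2 / (1 + x) := by ring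
    rw [this]
    have h1 : |ydot0 ^ 2 * x ^ 2 / (1 - x)| ≤ 2 * ydot0 ^ 2 * x ^ 2 := by
      rw [abs_div, abs_of_nonneg (by positivity), abs_of_pos (by linarith : (0:ℝ) < 1 - x)]
      rw [div_le_iff₀ (by linarith : (0:ℝ) < 1 - x)]
      nlinarith [mul_nonneg (mul_nonneg (sq_nonneg ydot0) (sq_nonneg x)) (by linarith : (0:ℝ) ≤ 1 - 2*x)]
    have h2 : |xdot0 ^ 2 * x ^ 2 / (1 + x)| ≤ 2 * xdot0 ^ 2 * x ^ 2 := by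
      rw [abs_div, abs_of_nonneg (by positivity), abs_of_pos hx3]
      rw [div_le_iff₀ hx3]
      nlinarith [mul_nonneg (mul_nonneg (sq_nonneg xdot0) (sq_nonneg x)) (by linarith : (0:ℝ) ≤ 1 + 2*x)]
    calc |ydot0 ^ 2 * x ^ 2 / (1 - x) - xdot0 ^ 2 * x ^ 2 / (1 + x)|
        ≤ |ydot0 ^ 2 * x ^ 2 / (1 - x)| + |xdot0 ^ 2 * x ^ 2 / (1 + x)| := abs_sub _ _
      _ ≤ 2 * ydot0 ^ 2 * x ^ 2 + 2 * xdot0 ^ 2 * x ^ 2 := add_le_add h1 h2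
      _ = 2 * (xdot0 ^ 2 + ydot0 ^ 2) * x ^ 2 := by ring

lemma hasDerivAt_X (x₀ xdot0 : ℝ) (u : ℝ) :
    HasDerivAt (Xgeo x₀ xdot0) (xdot0 / (1 + uplus u) ^ 2) u := by
  rcases lt_trichotomy u 0 with hu | hu | hu
  · have hev : Xgeo x₀ xdot0 =ᶠ[nhds u] fun w => x₀ + xdot0 * (1 + w) := by
      filter_upwards [Iio_mem_nhds hu] with w hw
      simp only [Xgeo, uplus_of_nonpos (le_of_lt hw), uminus_of_nonpos (le_of_lt hw)]
      ring
    have hlin : HasDerivAt (fun w : ℝ => x₀ + xdot0 * (1 + w)) xdot0 u := by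
      simpa using (((hasDerivAt_id u).const_add (1:ℝ)).const_mul xdot0).const_add x₀
    rw [uplus_of_nonpos hu.le]
    simpa using hlin.congr_of_eventuallyEq hev
  · subst hu
    rw [show uplus 0 = 0 from uplus_of_nonpos le_rfl]
    simpa using hasDerivAt_X_zero x₀ xdot0
  · have h2u : (1:ℝ) + u ≠ 0 := by positivity
    have hev : Xgeo x₀ xdot0 =ᶠ[nhds u] fun w => x₀ + xdot0 * 2 - xdot0 / (1 + w) := by
      filter_upwards [Ioi_mem_nhds hu] with w hw
      simp only [Xgeo, uplus_of_nonneg (le_of_lt hw), uminus_of_nonneg (le_of_lt hw)]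
      ring
    have hdiv : HasDerivAt (fun w : ℝ => xdot0 / (1 + w))
        ((0 * (1 + u) - xdot0 * 1) / (1 + u) ^ 2) u :=
      (hasDerivAt_const u xdot0).div ((hasDerivAt_id u).const_add 1) h2u
    have h := ((hasDerivAt_const u (x₀ + xdot0 * 2)).sub hdiv).congr_of_eventuallyEq
      (by exact hev)
    rw [uplus_of_nonneg hu.le]
    refine h.congr_deriv ?_
    field_simp
    ring

lemma hasDerivAt_Y (y₀ ydot0 : ℝ) {u : ℝ} (hu1 : u < 1) :
    HasDerivAt (Ygeo y₀ ydot0) (ydot0 / (1 - uplus u) ^ 2) u := by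
  rcases lt_trichotomy u 0 with hu | hu | hu
  · have hev : Ygeo y₀ ydot0 =ᶠ[nhds u] fun w => y₀ + ydot0 * (1 + w) := by
      filter_upwards [Iio_mem_nhds hu] with w hw
      simp only [Ygeo, uplus_of_nonpos (le_of_lt hw), uminus_of_nonpos (le_of_lt hw)]
      ring
    have hlin : HasDerivAt (fun w : ℝ => y₀ + ydot0 * (1 + w)) ydot0 u := by
      simpa using (((hasDerivAt_id u).const_add (1:ℝ)).const_mul ydot0).const_add y₀
    rw [uplus_of_nonpos hu.le]
    simpa using hlin.congr_of_eventuallyEq hev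
  · subst hu
    rw [show uplus 0 = 0 from uplus_of_nonpos le_rfl]
    simpa using hasDerivAt_Y_zero y₀ ydot0
  · have h1u : (1:ℝ) - u ≠ 0 := sub_ne_zero.2 (ne_of_gt hu1)
    have hev : Ygeo y₀ ydot0 =ᶠ[nhds u] fun w => y₀ + ydot0 / (1 - w) := by
      filter_upwards [Ioi_mem_nhds hu] with w hw
      simp only [Ygeo, uplus_of_nonneg (le_of_lt hw), uminus_of_nonneg (le_of_lt hw)]
      ring
    have hdiv : HasDerivAt (fun w : ℝ => ydot0 / (1 - w))
        ((0 * (1 - u) - ydot0 * (-1)) / (1 - u) ^ 2) u :=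
      (hasDerivAt_const u ydot0).div ((hasDerivAt_id u).const_sub 1) h1u
    have h := (hdiv.const_add y₀).congr_of_eventuallyEq hev
    rw [uplus_of_nonneg hu.le]
    refine h.congr_deriv ?_
    field_simp
    ring

lemma hasDerivAt_V (v₀ vdot0 xdot0 ydot0 : ℝ) {u : ℝ} (hu1 : u < 1) :
    HasDerivAt (Vgeo v₀ vdot0 xdot0 ydot0)
      (vdot0 + 2 * uplus u * (ydot0 ^ 2 / (1 - u) - xdot0 ^ 2 / (1 + u))
        + uplus u ^ 2 * (ydot0 ^ 2 / (1 - u) ^ 2 + xdot0 ^ 2 / (1 + u) ^ 2)) u := by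
  rcases lt_trichotomy u 0 with hu | hu | hu
  · have hev : Vgeo v₀ vdot0 xdot0 ydot0 =ᶠ[nhds u] fun w => v₀ + vdot0 * (1 + w) := by
      filter_upwards [Iio_mem_nhds hu] with w hw
      simp [Vgeo, uplus_of_nonpos (le_of_lt hw)]
    have hlin : HasDerivAt (fun w : ℝ => v₀ + vdot0 * (1 + w)) vdot0 u := by
      simpa using (((hasDerivAt_id u).const_add (1:ℝ)).const_mul vdot0).const_add v₀
    rw [uplus_of_nonpos hu.le]
    have h := hlin.congr_of_eventuallyEq hev
    refine h.congr_deriv ?_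
    ring
  · subst hu
    rw [show uplus 0 = 0 from uplus_of_nonpos le_rfl]
    simpa using hasDerivAt_V_zero v₀ vdot0 xdot0 ydot0
  · have h1u : (1:ℝ) - u ≠ 0 := sub_ne_zero.2 (ne_of_gt hu1)
    have h2u : (1:ℝ) + u ≠ 0 := by positivity
    have hev : Vgeo v₀ vdot0 xdot0 ydot0 =ᶠ[nhds u]
        fun w => v₀ + vdot0 * (1 + w) + ydot0 ^ 2 * w ^ 2 / (1 - w)
          - xdot0 ^ 2 * w ^ 2 / (1 + w) := by
      filter_upwards [Ioi_mem_nhds hu] with w hw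
      simp only [Vgeo, uplus_of_nonneg (le_of_lt hw)]
    have hA : HasDerivAt (fun w : ℝ => v₀ + vdot0 * (1 + w)) vdot0 u := by
      simpa using (((hasDerivAt_id u).const_add (1:ℝ)).const_mul vdot0).const_add v₀
    have hy : HasDerivAt (fun w : ℝ => ydot0 ^ 2 * w ^ 2 / (1 - w))
        ((ydot0 ^ 2 * (2 * u ^ 1) * (1 - u) - ydot0 ^ 2 * u ^ 2 * (-1)) / (1 - u) ^ 2) u :=
      ((hasDerivAt_pow 2 u).const_mul (ydot0 ^ 2)).div ((hasDerivAt_id u).const_sub 1) h1u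
    have hx : HasDerivAt (fun w : ℝ => xdot0 ^ 2 * w ^ 2 / (1 + w))
        ((xdot0 ^ 2 * (2 * u ^ 1) * (1 + u) - xdot0 ^ 2 * u ^ 2 * 1) / (1 + u) ^ 2) u :=
      ((hasDerivAt_pow 2 u).const_mul (xdot0 ^ 2)).div ((hasDerivAt_id u).const_add 1) h2u
    have h := ((hA.add hy).sub hx).congr_of_eventuallyEq hev
    rw [uplus_of_nonneg hu.le]
    refine h.congr_deriv ?_
    field_simp
    ring

/-- The `V`-geodesic of the continuous form of the impulsive plane wave: it is `C¹` on
`(-∞,1)`, smooth off the shock, satisfies its initial conditions and geodesic equation,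
and obeys the affine-parameter normalization
`-V' + (1+u₊)² X'² + (1-u₊)² Y'² = -v̇₀ + ẋ₀² + ẏ₀²`. -/
theorem continuous_metric_V_geodesic (x₀ xdot0 y₀ ydot0 v₀ vdot0 : ℝ) :
    ContDiffOn ℝ 1 (Vgeo v₀ vdot0 xdot0 ydot0) (Iio 1) ∧
    ContDiffOn ℝ (⊤ : ℕ∞) (Vgeo v₀ vdot0 xdot0 ydot0) (Iio 0) ∧
    ContDiffOn ℝ (⊤ : ℕ∞) (Vgeo v₀ vdot0 xdot0 ydot0) (Ioo 0 1) ∧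
    Vgeo v₀ vdot0 xdot0 ydot0 (-1) = v₀ ∧
    deriv (Vgeo v₀ vdot0 xdot0 ydot0) (-1) = vdot0 ∧
    (∀ u < (0:ℝ), deriv (deriv (Vgeo v₀ vdot0 xdot0 ydot0)) u = 0) ∧
    (∀ u ∈ Ioo (0:ℝ) 1, deriv (deriv (Vgeo v₀ vdot0 xdot0 ydot0)) u =
      2 * (1 - u) * (deriv (Ygeo y₀ ydot0) u) ^ 2
        - 2 * (1 + u) * (deriv (Xgeo x₀ xdot0) u) ^ 2) ∧
    (∀ u < (1:ℝ),
      -(deriv (Vgeo v₀ vdot0 xdot0 ydot0) u)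
        + (1 + uplus u) ^ 2 * (deriv (Xgeo x₀ xdot0) u) ^ 2
        + (1 - uplus u) ^ 2 * (deriv (Ygeo y₀ ydot0) u) ^ 2
      = -vdot0 + xdot0 ^ 2 + ydot0 ^ 2) := by
  have hup : Continuous uplus := continuous_id.max continuous_const
  have derivV : ∀ u < (1:ℝ), deriv (Vgeo v₀ vdot0 xdot0 ydot0) u
      = vdot0 + 2 * uplus u * (ydot0 ^ 2 / (1 - u) - xdot0 ^ 2 / (1 + u))
        + uplus u ^ 2 * (ydot0 ^ 2 / (1 - u) ^ 2 + xdot0 ^ 2 / (1 + u) ^ 2) :=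
    fun u hu => (hasDerivAt_V v₀ vdot0 xdot0 ydot0 hu).deriv
  have derivX : ∀ u : ℝ, deriv (Xgeo x₀ xdot0) u = xdot0 / (1 + uplus u) ^ 2 :=
    fun u => (hasDerivAt_X x₀ xdot0 u).deriv
  have derivY : ∀ u < (1:ℝ), deriv (Ygeo y₀ ydot0) u = ydot0 / (1 - uplus u) ^ 2 :=
    fun u hu => (hasDerivAt_Y y₀ ydot0 hu).deriv
  have hevneg : ∀ u < (0:ℝ), deriv (Vgeo v₀ vdot0 xdot0 ydot0) =ᶠ[nhds u] fun _ => vdot0 := by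
    intro u hu
    filter_upwards [Iio_mem_nhds hu] with w hw
    rw [derivV w (hw.trans one_pos), uplus_of_nonpos hw.le]
    ring
  refine ⟨?_, ?_, ?_, ?_, ?_, ?_, ?_, ?_⟩
  · -- C¹ on Iio 1
    have h01 : (1 : WithTop ℕ∞) = 0 + 1 := by norm_num
    rw [h01, contDiffOn_succ_iff_deriv_of_isOpen isOpen_Iio]
    refine ⟨fun x hx => (hasDerivAt_V v₀ vdot0 xdot0 ydot0 hx).differentiableAt.differentiableWithinAt,
      by simp, ?_⟩
    rw [contDiffOn_zero]
    intro x hx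
    apply ContinuousAt.continuousWithinAt
    rcases lt_or_ge x 0 with h | h
    · exact continuousAt_const.congr (hevneg x h).symm
    · have h1 : (1:ℝ) - x ≠ 0 := sub_ne_zero.2 (ne_of_gt hx)
      have h2 : (1:ℝ) + x ≠ 0 := by positivity
      have hev : deriv (Vgeo v₀ vdot0 xdot0 ydot0) =ᶠ[nhds x]
          fun w => vdot0 + 2 * uplus w * (ydot0 ^ 2 / (1 - w) - xdot0 ^ 2 / (1 + w))
            + uplus w ^ 2 * (ydot0 ^ 2 / (1 - w) ^ 2 + xdot0 ^ 2 / (1 + w) ^ 2) := by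
        filter_upwards [Iio_mem_nhds hx] with w hw
        exact derivV w hw
      have hgy : ContinuousAt (fun w : ℝ => ydot0 ^ 2 / (1 - w)) x :=
        continuousAt_const.div (continuous_const.sub continuous_id).continuousAt h1
      have hgx : ContinuousAt (fun w : ℝ => xdot0 ^ 2 / (1 + w)) x :=
        continuousAt_const.div (continuous_const.add continuous_id).continuousAt h2
      have hgy2 : ContinuousAt (fun w : ℝ => ydot0 ^ 2 / (1 - w) ^ 2) x :=
        continuousAt_const.div ((continuous_const.sub continuous_id).pow 2).continuousAt
          (pow_ne_zero 2 h1)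
      have hgx2 : ContinuousAt (fun w : ℝ => xdot0 ^ 2 / (1 + w) ^ 2) x :=
        continuousAt_const.div ((continuous_const.add continuous_id).pow 2).continuousAt
          (pow_ne_zero 2 h2)
      have hc : ContinuousAt (fun w => vdot0 + 2 * uplus w * (ydot0 ^ 2 / (1 - w)
          - xdot0 ^ 2 / (1 + w)) + uplus w ^ 2 * (ydot0 ^ 2 / (1 - w) ^ 2
          + xdot0 ^ 2 / (1 + w) ^ 2)) x :=
        (continuousAt_const.add (((continuous_const.mul hup).continuousAt).mul
          (hgy.sub hgx))).add (((hup.pow 2).continuousAt).mul (hgy2.add hgx2))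
      exact hc.congr hev.symm
  · -- smooth on Iio 0
    have hsm : ContDiffOn ℝ (⊤ : ℕ∞) (fun w : ℝ => v₀ + vdot0 * (1 + w)) (Iio 0) :=
      (contDiff_const.add (contDiff_const.mul (contDiff_const.add contDiff_id))).contDiffOn
    exact hsm.congr fun w hw => by simp [Vgeo, uplus_of_nonpos (le_of_lt hw)]
  · -- smooth on Ioo 0 1
    have hsm : ContDiffOn ℝ (⊤ : ℕ∞) (fun w : ℝ => v₀ + vdot0 * (1 + w)
        + ydot0 ^ 2 * w ^ 2 / (1 - w) - xdot0 ^ 2 * w ^ 2 / (1 + w)) (Ioo 0 1) := by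
      refine ContDiffOn.sub (ContDiffOn.add ?_ ?_) ?_
      · exact (contDiff_const.add (contDiff_const.mul (contDiff_const.add contDiff_id))).contDiffOn
      · exact ContDiffOn.div (contDiff_const.mul (contDiff_id.pow 2)).contDiffOn
          (contDiff_const.sub contDiff_id).contDiffOn
          fun w hw => sub_ne_zero.2 (ne_of_gt hw.2)
      · exact ContDiffOn.div (contDiff_const.mul (contDiff_id.pow 2)).contDiffOn
          (contDiff_const.add contDiff_id).contDiffOn
          fun w hw => by have h0 := hw.1; positivity
    exact hsm.congr fun w hw => by simp only [Vgeo, uplus_of_nonneg hw.1.le]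
  · -- initial position
    norm_num [Vgeo, uplus]
  · -- initial velocity
    rw [derivV (-1) (by norm_num)]
    norm_num [uplus]
  · -- V'' = 0 for u < 0
    intro u hu
    rw [(hevneg u hu).deriv_eq, deriv_const]
  · -- V'' on (0,1)
    rintro u ⟨hu0, hu1⟩
    have h1 : (1:ℝ) - u ≠ 0 := sub_ne_zero.2 (ne_of_gt hu1)
    have h2 : (1:ℝ) + u ≠ 0 := by positivity
    have hev : deriv (Vgeo v₀ vdot0 xdot0 ydot0) =ᶠ[nhds u]
        fun w => vdot0 + 2 * w * (ydot0 ^ 2 / (1 - w) - xdot0 ^ 2 / (1 + w))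
          + w ^ 2 * (ydot0 ^ 2 / (1 - w) ^ 2 + xdot0 ^ 2 / (1 + w) ^ 2) := by
      filter_upwards [Ioo_mem_nhds hu0 hu1] with w hw
      rw [derivV w hw.2, uplus_of_nonneg hw.1.le]
    rw [hev.deriv_eq]
    have hgy : HasDerivAt (fun w : ℝ => ydot0 ^ 2 / (1 - w))
        ((0 * (1 - u) - ydot0 ^ 2 * (-1)) / (1 - u) ^ 2) u :=
      (hasDerivAt_const u (ydot0 ^ 2)).div ((hasDerivAt_id u).const_sub 1) h1
    have hgx : HasDerivAt (fun w : ℝ => xdot0 ^ 2 / (1 + w))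
        ((0 * (1 + u) - xdot0 ^ 2 * 1) / (1 + u) ^ 2) u :=
      (hasDerivAt_const u (xdot0 ^ 2)).div ((hasDerivAt_id u).const_add 1) h2
    have hgy2 : HasDerivAt (fun w : ℝ => ydot0 ^ 2 / (1 - w) ^ 2)
        ((0 * (1 - u) ^ 2 - ydot0 ^ 2 * (2 * (1 - u) ^ 1 * -1)) / ((1 - u) ^ 2) ^ 2) u :=
      (hasDerivAt_const u (ydot0 ^ 2)).div (((hasDerivAt_id u).const_sub 1).pow 2)
        (pow_ne_zero 2 h1)
    have hgx2 : HasDerivAt (fun w : ℝ => xdot0 ^ 2 / (1 + w) ^ 2)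
        ((0 * (1 + u) ^ 2 - xdot0 ^ 2 * (2 * (1 + u) ^ 1 * 1)) / ((1 + u) ^ 2) ^ 2) u :=
      (hasDerivAt_const u (xdot0 ^ 2)).div (((hasDerivAt_id u).const_add 1).pow 2)
        (pow_ne_zero 2 h2)
    have hlin : HasDerivAt (fun w : ℝ => 2 * w) 2 u := by
      simpa using (hasDerivAt_id u).const_mul (2:ℝ)
    have hD := ((hasDerivAt_const u vdot0).add ((hlin.mul (hgy.sub hgx)).add
      ((hasDerivAt_pow 2 u).mul (hgy2.add hgx2))))
    rw [(by {ext w; ring} : (fun w : ℝ => vdot0 + 2 * w * (ydot0 ^ 2 / (1 - w)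
      - xdot0 ^ 2 / (1 + w)) + w ^ 2 * (ydot0 ^ 2 / (1 - w) ^ 2 + xdot0 ^ 2 / (1 + w) ^ 2))
      = fun w => vdot0 + (2 * w * (ydot0 ^ 2 / (1 - w) - xdot0 ^ 2 / (1 + w))
      + w ^ 2 * (ydot0 ^ 2 / (1 - w) ^ 2 + xdot0 ^ 2 / (1 + w) ^ 2)))]
    erw [hD.deriv]
    simp only [Pi.add_apply, Pi.sub_apply]
    rw [derivY u hu1, derivX, uplus_of_nonneg hu0.le]
    field_simp
    ring
  · -- normalization
    intro u hu
    rw [derivV u hu, derivX, derivY u hu]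
    rcases le_or_gt u 0 with h | h
    · rw [uplus_of_nonpos h]
      ring
    · have h1 : (1:ℝ) - u ≠ 0 := sub_ne_zero.2 (ne_of_gt hu)
      have h2 : (1:ℝ) + u ≠ 0 := by positivity
      rw [uplus_of_nonneg h.le]
      field_simp
      ring
end
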